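/- arXiv:0912.2923 — 2 statements merged into one kernel-verified Lean document; each statement's English description precedes it below -/
import Mathlib

section
/- Let χ be an integer and r, a positive integers. Then (−1)^{ra} · ∑_{k=1}^{a} r^{k−2} (χ^k / k!) · ∑ (∏_{l=1}^{k} n_l) / (∏_{l=1}^{k} i_l), where the inner sum runs over all pairs of k-tuples (n_1,…,n_k), (i_1,…,i_k) of positive integers with ∑_{l=1}^{k} n_l i_l = a, equals (1/r²) times the coefficient of t^a in the formal power series M((−1)^r t)^{rχ}, both viewed as rational numbers. -/
/-
Since `1 - t^n = exp (-∑_{i ≥ 1} t^{ni}/i)`, the power `M(t)^m` is `exp (m L(t))` with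
`L(t) = ∑_{n, i ≥ 1} (n/i) t^{ni}`, and `M(ε t)` is `M(t)` rescaled by `ε`. Expanding the
exponential, the coefficient of `t^a` in `M(ε t)^m` is `ε^a ∑_k (m^k/k!) [t^a] L(t)^k`, and
`[t^a] L(t)^k` is the tuple sum, since only the terms of `L` with `n, i ≤ a` contribute. For
`ε = (-1)^r` and `m = rχ` one has `m^k / r^2 = r^(k-2) χ^k`. The identities for `exp` of a
series are proved via uniqueness of solutions of `y' = y c` with given constant term.
-/

open PowerSeries Finset

/-- The unit `1 - (ε t)^(n+1)` of `ℤ⟦t⟧`. -/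
noncomputable def oneSubUnit (ε : ℤ) (n : ℕ) : (PowerSeries ℤ)ˣ :=
  IsUnit.unit (a := (1 : PowerSeries ℤ) - (PowerSeries.C ε * PowerSeries.X) ^ (n + 1))
    (by
      rw [PowerSeries.isUnit_iff_constantCoeff]
      simp)

/-- The coefficient of `t^a` in `M(ε t)^m`, where `M` is the MacMahon function
`M(t) = ∏_{n ≥ 1} (1 - t^n)^{-n}` and the (integer) power is taken in the group of units
of `ℤ⟦t⟧`.  Since the factor `(1 - (ε t)^n)^{-n m}` is `1 + O(t^n)`, only the factors with
`1 ≤ n ≤ a` affect the coefficient of `t^a`, so the coefficient of the infinite product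
equals the corresponding coefficient of the finite product over `1 ≤ n ≤ a`. -/
noncomputable def macMahonPowCoeff (ε m : ℤ) (a : ℕ) : ℤ :=
  PowerSeries.coeff a
    ↑(∏ n ∈ Finset.range a, (oneSubUnit ε n) ^ (-(((n : ℤ) + 1) * m)))

/-- The sum over all pairs of `k`-tuples `(n_1,…,n_k)`, `(i_1,…,i_k)` of positive integers
with `∑ n_l i_l = a` of `(∏ n_l)/(∏ i_l)`.  The constraint forces every entry to lie in
`{1, …, a}`, so the sum may be taken over tuples with entries in `[1, a]`. -/
noncomputable def tupleSum (k a : ℕ) : ℚ :=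
  ∑ f ∈ (Fintype.piFinset fun _ : Fin k => Finset.Icc 1 a ×ˢ Finset.Icc 1 a) |>.filter
      (fun f => ∑ l, (f l).1 * (f l).2 = a),
    (∏ l, ((f l).1 : ℚ)) / ∏ l, ((f l).2 : ℚ)

namespace PowerSeries

theorem eq_of_derivative_eq_mul {R : Type*} [CommRing R] [IsAddTorsionFree R] {c F G : R⟦X⟧}
    (hF : d⁄dX R F = F * c) (hG : d⁄dX R G = G * c) (h0 : constantCoeff F = constantCoeff G) :
    F = G := by
  ext n
  induction n using Nat.strong_induction_on with
  | _ n ih =>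
    cases n with
    | zero => simpa using h0
    | succ n =>
      have h : coeff n (d⁄dX R F) = coeff n (d⁄dX R G) := by
        rw [hF, hG, coeff_mul, coeff_mul]
        exact sum_congr rfl fun p hp => by rw [ih p.1 (by linarith [mem_antidiagonal.1 hp])]
      rw [coeff_derivative, coeff_derivative, ← Nat.cast_succ, mul_comm, ← nsmul_eq_mul,
        mul_comm, ← nsmul_eq_mul] at h
      exact nsmul_right_injective n.succ_ne_zero h

theorem coeff_pow_eq_zero_of_lt {R : Type*} [CommSemiring R] {f : R⟦X⟧}
    (hf : constantCoeff f = 0) {n k : ℕ} (h : n < k) : coeff n (f ^ k) = 0 :=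
  X_pow_dvd_iff.1 (pow_dvd_pow_of_dvd (X_dvd_iff.2 hf) k) n h

theorem coeff_pow_eq_of_forall_coeff_eq {R : Type*} [CommSemiring R] {f g : R⟦X⟧} {n : ℕ}
    (h : ∀ j ≤ n, coeff j f = coeff j g) (k : ℕ) : coeff n (f ^ k) = coeff n (g ^ k) := by
  have htrunc : trunc (n + 1) f = trunc (n + 1) g := by
    ext j
    simp only [coeff_trunc]
    split_ifs with hj
    · exact h j (Nat.lt_succ_iff.1 hj)
    · rfl
  rw [← coeff_coe_trunc_of_lt n.lt_succ_self, ← trunc_trunc_pow, htrunc, trunc_trunc_pow,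
    coeff_coe_trunc_of_lt n.lt_succ_self]

theorem coeff_sum_monomial_pow {R ι : Type*} [CommSemiring R] (s : Finset ι) (e : ι → ℕ)
    (c : ι → R) (k n : ℕ) :
    coeff n ((∑ i ∈ s, monomial (e i) (c i)) ^ k) =
      ∑ f ∈ (Fintype.piFinset fun _ : Fin k => s) with ∑ l, e (f l) = n, ∏ l, c (f l) := by
  rw [sum_pow', map_sum, sum_filter]
  refine sum_congr rfl fun f _ => ?_
  rw [prod_monomial, coeff_monomial]
  exact if_congr eq_comm rfl rfl

section Exp

variable {A : Type*} [CommRing A] [Algebra ℚ A] {f g : A⟦X⟧}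

theorem coeff_exp_subst (hf : constantCoeff f = 0) (n : ℕ) :
    coeff n ((exp A).subst f) =
      ∑ k ∈ range (n + 1), (k.factorial : ℚ)⁻¹ • coeff n (f ^ k) := by
  rw [coeff_subst' (HasSubst.of_constantCoeff_zero' hf),
    finsum_eq_sum_of_support_subset (s := range (n + 1))]
  · refine sum_congr rfl fun k _ => ?_
    rw [coeff_exp, one_div, algebraMap_smul]
  · intro k hk
    by_contra! hkn
    rw [coe_range, Set.mem_Iio, not_lt] at hkn
    exact Function.mem_support.1 hk (by rw [coeff_pow_eq_zero_of_lt hf hkn, smul_zero])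

theorem constantCoeff_exp_subst (hf : constantCoeff f = 0) :
    constantCoeff ((exp A).subst f) = 1 := by
  rw [← coeff_zero_eq_constantCoeff_apply, coeff_exp_subst hf]
  simp

theorem exp_subst_zero : (exp A).subst (0 : A⟦X⟧) = 1 := by
  rw [subst_zero_eq_C_constantCoeff, constantCoeff_exp]
  simp

theorem derivative_exp_subst (hf : constantCoeff f = 0) :
    d⁄dX A ((exp A).subst f) = (exp A).subst f * d⁄dX A f := by
  rw [derivative_subst (HasSubst.of_constantCoeff_zero' hf), derivative_exp]

theorem exp_subst_add (hf : constantCoeff f = 0) (hg : constantCoeff g = 0) :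
    (exp A).subst (f + g) = (exp A).subst f * (exp A).subst g := by
  have hfg : constantCoeff (f + g) = 0 := by rw [map_add, hf, hg, add_zero]
  have : IsAddTorsionFree A := .of_module_rat A
  refine eq_of_derivative_eq_mul (derivative_exp_subst hfg) ?_ ?_
  · rw [Derivation.leibniz, derivative_exp_subst hf, derivative_exp_subst hg, map_add,
      smul_eq_mul, smul_eq_mul]
    ring
  · rw [map_mul, constantCoeff_exp_subst hf, constantCoeff_exp_subst hg,
      constantCoeff_exp_subst hfg, mul_one]

theorem exp_subst_sum {ι : Type*} (s : Finset ι) {f : ι → A⟦X⟧}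
    (hf : ∀ i ∈ s, constantCoeff (f i) = 0) :
    (exp A).subst (∑ i ∈ s, f i) = ∏ i ∈ s, (exp A).subst (f i) := by
  induction s using Finset.cons_induction with
  | empty => exact exp_subst_zero
  | cons i s his ih =>
    have hs : ∀ j ∈ s, constantCoeff (f j) = 0 := fun j hj => hf j (mem_cons_of_mem hj)
    rw [sum_cons, prod_cons, exp_subst_add (hf i (mem_cons_self i s))
      (by rw [map_sum]; exact sum_eq_zero hs), ih hs]

theorem val_zpow_eq_exp_subst_zsmul {u : A⟦X⟧ˣ} (hf : constantCoeff f = 0)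
    (hu : (u : A⟦X⟧) = (exp A).subst f) (z : ℤ) :
    ((u ^ z : A⟦X⟧ˣ) : A⟦X⟧) = (exp A).subst (z • f) := by
  have hzf (z : ℤ) : constantCoeff (z • f) = 0 := by rw [map_zsmul, hf, smul_zero]
  induction z using Int.induction_on with
  | zero => rw [zpow_zero, zero_smul, exp_subst_zero, Units.val_one]
  | succ z ih =>
    rw [zpow_add_one, Units.val_mul, ih, hu, add_smul, one_smul, exp_subst_add (hzf z) hf]
  | pred z ih =>
    have hinv : ((u⁻¹ : A⟦X⟧ˣ) : A⟦X⟧) = (exp A).subst (-f) := by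
      refine Units.inv_eq_of_mul_eq_one_right ?_
      rw [hu, ← exp_subst_add hf (by rw [map_neg, hf, neg_zero]), add_neg_cancel, exp_subst_zero]
    rw [zpow_sub_one, Units.val_mul, ih, hinv, sub_smul, one_smul, sub_eq_add_neg,
      exp_subst_add (hzf _) (by rw [map_neg, hf, neg_zero])]

theorem one_add_X_mul_derivative_log : (1 + X) * d⁄dX A (log A) = 1 := by
  ext n
  rw [add_mul, one_mul, map_add, deriv_log]
  cases n with
  | zero => simp
  | succ n => simp [pow_succ]

theorem constantCoeff_log_subst {h : A⟦X⟧} (hh : constantCoeff h = 0) :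
    constantCoeff ((log A).subst h) = 0 :=
  constantCoeff_subst_eq_zero hh _ constantCoeff_log

theorem exp_subst_log_subst {h : A⟦X⟧} (hh : constantCoeff h = 0) :
    (exp A).subst ((log A).subst h) = 1 + h := by
  have hs : HasSubst h := HasSubst.of_constantCoeff_zero' hh
  have hlog := constantCoeff_log_subst hh
  have hinv : (1 + h) * (d⁄dX A (log A)).subst h = 1 := by
    have := congrArg (subst h) (one_add_X_mul_derivative_log (A := A))
    rwa [subst_mul hs, subst_add hs, subst_X hs, ← map_one (C (R := A)), subst_C, map_one] at this
  have : IsAddTorsionFree A := .of_module_rat A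
  refine eq_of_derivative_eq_mul (derivative_exp_subst hlog) ?_ ?_
  · rw [derivative_subst hs, ← mul_assoc, hinv, one_mul, map_add, derivative_one, zero_add]
  · rw [constantCoeff_exp_subst hlog, map_add, hh, map_one, add_zero]

-- At `j = 0` the right-hand side is `-(0 : ℚ)⁻¹ = 0`, the constant term.
theorem coeff_log_subst_neg_X_pow {d : ℕ} (hd : d ≠ 0) (j : ℕ) :
    coeff j ((log A).subst (-X ^ d : A⟦X⟧)) =
      if d ∣ j then -algebraMap ℚ A (j / d : ℕ)⁻¹ else 0 := by
  have hX : HasSubst (-X : A⟦X⟧) := HasSubst.of_constantCoeff_zero' (by simp)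
  have hXd : HasSubst (X ^ d : A⟦X⟧) := HasSubst.X_pow hd
  have hcomp :
      (log A).subst (-X ^ d : A⟦X⟧) = (rescale (-1 : A) (log A)).subst (X ^ d : A⟦X⟧) := by
    rw [rescale_eq_subst, neg_one_smul, subst_comp_subst_apply hX hXd, ← coe_substAlgHom hXd,
      map_neg, coe_substAlgHom, subst_X hXd]
  rw [hcomp, coeff_subst_X_pow hd]
  split_ifs
  · rw [Algebra.algebraMap_self_apply, coeff_rescale, coeff_log]
    split_ifs with h0
    · simp [h0]
    · rw [show (-1 : A) ^ (j / d) = algebraMap ℚ A ((-1) ^ (j / d)) by simp, ← map_mul,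
        ← map_neg, pow_succ, ← mul_div_assoc, ← mul_assoc, ← pow_add, ← two_mul, pow_mul]
      simp [neg_div]
  · rfl

end Exp
end PowerSeries

/-- `log ∏_{n ≤ a} (1 - t^n)^{-n}`. -/
noncomputable def logPartialMacMahon (A : Type*) [CommRing A] [Algebra ℚ A] (a : ℕ) :
    A⟦X⟧ :=
  -∑ n ∈ range a, ((n : ℚ) + 1) • (log A).subst (-X ^ (n + 1) : A⟦X⟧)

theorem val_prod_zpow_eq_exp_subst {A : Type*} [CommRing A] [Algebra ℚ A]
    {v : ℕ → A⟦X⟧ˣ} (hv : ∀ n, (v n : A⟦X⟧) = 1 - X ^ (n + 1)) (m : ℤ) (a : ℕ) :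
    (↑(∏ n ∈ range a, v n ^ (-(((n : ℤ) + 1) * m))) : A⟦X⟧) =
      (exp A).subst ((m : ℚ) • logPartialMacMahon A a) := by
  set ℓ : ℕ → A⟦X⟧ := fun n => (log A).subst (-X ^ (n + 1) : A⟦X⟧)
  have hℓ (n : ℕ) : constantCoeff (ℓ n) = 0 := constantCoeff_log_subst (by simp)
  have hv' (n : ℕ) : (v n : A⟦X⟧) = (exp A).subst (ℓ n) := by
    rw [hv, exp_subst_log_subst (by simp), sub_eq_add_neg]
  rw [Units.coe_prod, prod_congr rfl fun n _ => val_zpow_eq_exp_subst_zsmul (hℓ n) (hv' n) _,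
    ← exp_subst_sum _ fun n _ => by rw [map_zsmul, hℓ, smul_zero], logPartialMacMahon, smul_neg,
    smul_sum, ← sum_neg_distrib]
  congr 1
  refine sum_congr rfl fun n _ => ?_
  rw [smul_smul, ← neg_smul, ← Int.cast_smul_eq_zsmul ℚ]
  congr 1
  push_cast
  ring

/-- The terms `(n/i) t^{ni}` with `n, i ≤ a` of `log M(t) = ∑_{n, i ≥ 1} (n/i) t^{ni}`; they
determine `log M` up to degree `a`. -/
noncomputable def logMacMahonTrunc (a : ℕ) : ℚ⟦X⟧ :=
  ∑ p ∈ Icc 1 a ×ˢ Icc 1 a, monomial (p.1 * p.2) ((p.1 : ℚ) / p.2)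

theorem coeff_logMacMahonTrunc_pow (k a : ℕ) :
    coeff a (logMacMahonTrunc a ^ k) = tupleSum k a := by
  rw [logMacMahonTrunc, coeff_sum_monomial_pow, tupleSum]
  exact sum_congr rfl fun f _ => prod_div_distrib _ _

theorem coeff_logPartialMacMahon {a j : ℕ} (hj : j ≤ a) :
    coeff j (logPartialMacMahon ℚ a) = coeff j (logMacMahonTrunc a) := by
  have hreindex :=
    sum_Ico_add' (fun n : ℕ => (n : ℚ) • (log ℚ).subst (-X ^ n : ℚ⟦X⟧)) 0 a 1
  rw [zero_add, Ico_add_one_right_eq_Icc, ← range_eq_Ico] at hreindex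
  push_cast at hreindex
  rw [logPartialMacMahon, hreindex, logMacMahonTrunc, map_sum, sum_product, map_neg, map_sum,
    ← sum_neg_distrib, eq_comm]
  refine sum_congr rfl fun n hn => ?_
  have hn0 : 0 < n := (mem_Icc.1 hn).1
  rw [coeff_smul, coeff_log_subst_neg_X_pow hn0.ne', smul_eq_mul]
  simp only [coeff_monomial]
  split_ifs with hdvd
  · obtain ⟨i, rfl⟩ := hdvd
    rw [Nat.mul_div_cancel_left i hn0]
    rcases i.eq_zero_or_pos with rfl | hi
    · refine (sum_eq_zero fun y hy => if_neg ?_).trans (by simp)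
      have := (mem_Icc.1 hy).1
      positivity
    · simp only [Nat.mul_left_cancel_iff hn0, sum_ite_eq, Algebra.algebraMap_self_apply]
      rw [if_pos (mem_Icc.2 ⟨hi, le_trans (Nat.le_mul_of_pos_left i hn0) hj⟩)]
      ring
  · refine (sum_eq_zero fun y _ => if_neg ?_).trans (by simp)
    rintro rfl
    exact hdvd (dvd_mul_right n y)

theorem coeff_prod_zpow_one_sub_X_pow {v : ℕ → ℚ⟦X⟧ˣ}
    (hv : ∀ n, (v n : ℚ⟦X⟧) = 1 - X ^ (n + 1)) (m : ℤ) {a : ℕ} (ha : a ≠ 0) :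
    coeff a (↑(∏ n ∈ range a, v n ^ (-(((n : ℤ) + 1) * m))) : ℚ⟦X⟧) =
      ∑ k ∈ Icc 1 a, (m : ℚ) ^ k / k.factorial * tupleSum k a := by
  set L := logPartialMacMahon ℚ a
  have hL : constantCoeff ((m : ℚ) • L) = 0 := by
    simp [L, logPartialMacMahon, constantCoeff_log_subst]
  have hpow (k : ℕ) : coeff a (((m : ℚ) • L) ^ k) = m ^ k * tupleSum k a := by
    rw [smul_pow, coeff_smul, ← coeff_logMacMahonTrunc_pow,
      coeff_pow_eq_of_forall_coeff_eq (fun j hj => coeff_logPartialMacMahon hj), smul_eq_mul]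
  rw [val_prod_zpow_eq_exp_subst hv, coeff_exp_subst hL, range_eq_Ico,
    sum_eq_sum_Ico_succ_bot a.succ_pos, zero_add, Nat.succ_eq_add_one, Ico_add_one_right_eq_Icc]
  simp only [hpow, pow_zero, coeff_one, if_neg ha, smul_eq_mul, mul_zero, zero_add]
  exact sum_congr rfl fun k _ => by ring

theorem cast_macMahonPowCoeff (ε m : ℤ) {a : ℕ} (ha : a ≠ 0) :
    (macMahonPowCoeff ε m a : ℚ) =
      (ε : ℚ) ^ a * ∑ k ∈ Icc 1 a, (m : ℚ) ^ k / k.factorial * tupleSum k a := by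
  set φ : ℤ⟦X⟧ →+* ℚ⟦X⟧ := map (Int.castRingHom ℚ)
  set ψ : ℚ⟦X⟧ →+* ℚ⟦X⟧ := rescale (ε : ℚ)
  set v : ℕ → ℚ⟦X⟧ˣ := fun n => Units.map φ (oneSubUnit 1 n)
  have hv (n : ℕ) : (v n : ℚ⟦X⟧) = 1 - X ^ (n + 1) := by simp [v, φ, oneSubUnit]
  have hrescale (n : ℕ) :
      Units.map φ (oneSubUnit ε n) = Units.map (ψ : ℚ⟦X⟧ →* ℚ⟦X⟧) (v n) := by
    ext1
    simp [v, φ, ψ, oneSubUnit, mul_pow]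
  have hprod : φ ↑(∏ n ∈ range a, oneSubUnit ε n ^ (-(((n : ℤ) + 1) * m))) =
      ψ ↑(∏ n ∈ range a, v n ^ (-(((n : ℤ) + 1) * m))) := by
    simp only [← MonoidHom.coe_coe φ, ← MonoidHom.coe_coe ψ, ← Units.coe_map, map_prod,
      map_zpow, hrescale]
  rw [macMahonPowCoeff, ← coeff_prod_zpow_one_sub_X_pow hv m ha, ← coeff_rescale, ← hprod,
    coeff_map, eq_intCast]

/-- For `χ ∈ ℤ` and positive integers `r`, `a`,
`(-1)^{ra} ∑_{k=1}^{a} r^{k-2} (χ^k/k!) ∑_{∑ n_l i_l = a} (∏ n_l)/(∏ i_l)` equals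
`1/r²` times the coefficient of `t^a` in `M((-1)^r t)^{rχ}`, as rational numbers.
(Tuples with `∑ n_l i_l = a` require `k ≤ a`, so the outer sum may be truncated at
`k = a`.) -/
theorem neg_one_pow_mul_sum_eq_coeff_macMahon_rank (χ : ℤ) (r a : ℕ)
    (hr : 0 < r) (ha : 0 < a) :
    (-1 : ℚ) ^ (r * a) *
        ∑ k ∈ Finset.Icc 1 a,
          (r : ℚ) ^ ((k : ℤ) - 2) * ((χ : ℚ) ^ k / (Nat.factorial k : ℚ)) * tupleSum k a =
      (1 / (r : ℚ) ^ 2) * (macMahonPowCoeff ((-1) ^ r) ((r : ℤ) * χ) a : ℚ) := by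
  have hr0 : (r : ℚ) ≠ 0 := by exact_mod_cast hr.ne'
  rw [cast_macMahonPowCoeff _ _ ha.ne']
  push_cast
  rw [← pow_mul, mul_left_comm (1 / _)]
  congr 1
  rw [mul_sum]
  refine sum_congr rfl fun k _ => ?_
  rw [zpow_sub₀ hr0, zpow_natCast, mul_pow]
  field_simp
end

section
/- Let χ be an integer, a a positive integer divisible by 3, and p a partition of a that has at least one part not divisible by 3. Writing d_i = p_i − p_{i+1} for i ≥ 1, the finite product ∏_{i≥1} C(3iχ − 1 + d_i, d_i) is divisible by 9. -/
/-!
For `n : ℤ` and `d ≥ 1`, upper negation and absorption give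
`d • C(n - 1 + d, d) = ±d • C(-n, d) = ∓n • C(-n - 1, d - 1)`, so every divisor of `n` coprime
to `d` divides `C(n - 1 + d, d)`. In the product `n = 3iχ`, so the `i`-th factor is divisible
by `3` when `3 ∤ d_i`, and by `9` when moreover `3 ∣ i`. Each part is a sum `p_j = ∑_{i ≥ j} d_i`,
so some `d_i` is prime to `3`. If two are, two factors contribute a `3` each; if only `d_i` is,
then `a = ∑_j j d_j ≡ i d_i (mod 3)` forces `3 ∣ i`.
-/

open Finset

/-- The parts of a partition `p` of `a`, viewed as a weakly decreasing sequence
`p_1 ≥ p_2 ≥ ⋯` padded with zeros; `partSeq p i` is the part `p_{i+1}` (0-indexed). -/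
def partSeq {a : ℕ} (p : Nat.Partition a) (i : ℕ) : ℕ :=
  (p.parts.sort (· ≥ ·)).getD i 0

theorem dvd_natCast_mul_choose_sub_one_add (n : ℤ) (d : ℕ) :
    n ∣ d * Ring.choose (n - 1 + d) d := by
  rcases d with _ | e
  · simp
  have absorb := Ring.choose_smul_choose (-n) (Nat.le_add_left 1 e)
  rw [Nat.choose_one_right, Ring.choose_one_right, Nat.add_sub_cancel, Ring.choose_neg,
    show n + ↑(e + 1) - 1 = n - 1 + ↑(e + 1) by ring, smul_comm, nsmul_eq_mul, Units.smul_def,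
    smul_eq_mul] at absorb
  exact Units.dvd_mul_left.1 (absorb ▸ (dvd_neg.2 dvd_rfl).mul_right _)

theorem dvd_choose_sub_one_add_of_isCoprime {k n : ℤ} {d : ℕ} (hkn : k ∣ n) (hkd : IsCoprime k d) :
    k ∣ Ring.choose (n - 1 + d) d :=
  hkd.dvd_of_dvd_mul_left (hkn.trans (dvd_natCast_mul_choose_sub_one_add n d))

theorem List.sum_range_getD_zero {M : Type*} [AddCommMonoid M] (l : List M) {n : ℕ}
    (hn : l.length ≤ n) : ∑ i ∈ Finset.range n, l.getD i 0 = l.sum := by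
  have tail : ∑ i ∈ Finset.Ico l.length n, l.getD i 0 = 0 :=
    Finset.sum_eq_zero fun i hi => List.getD_eq_default _ _ (Finset.mem_Ico.1 hi).1
  rw [← Finset.sum_range_add_sum_Ico _ hn, tail, add_zero, Finset.sum_range]
  simp only [Fin.is_lt, List.getD_eq_getElem, Fin.sum_univ_getElem]

theorem sum_range_succ_mul_sub_succ (f : ℕ → ℤ) (n : ℕ) :
    ∑ i ∈ range n, (i + 1) * (f i - f (i + 1)) = ∑ i ∈ range n, f i - n * f n := by
  induction n with
  | zero => simp
  | succ n ih => rw [sum_range_succ, ih, sum_range_succ]; push_cast; ring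

section Partition

variable {a : ℕ} (p : Nat.Partition a)

theorem length_sort_parts_le : (p.parts.sort (· ≥ ·)).length ≤ a := by
  have h := Multiset.card_nsmul_le_sum (fun x hx => (p.parts_pos hx : 1 ≤ x))
  rw [p.parts_sum] at h
  simpa [Multiset.length_sort] using h

theorem partSeq_succ_le (i : ℕ) : partSeq p (i + 1) ≤ partSeq p i := by
  unfold partSeq
  set L := p.parts.sort (· ≥ ·)
  rcases lt_or_ge (i + 1) L.length with h | h
  · rw [List.getD_eq_getElem _ _ h, List.getD_eq_getElem _ _ (by omega)]
    exact List.pairwise_iff_getElem.1 (p.parts.pairwise_sort _) i (i + 1) _ h (by omega)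
  · rw [List.getD_eq_default _ _ h]
    exact Nat.zero_le _

theorem partSeq_eq_zero_of_le {i : ℕ} (h : a ≤ i) : partSeq p i = 0 :=
  List.getD_eq_default _ _ ((length_sort_parts_le p).trans h)

theorem sum_range_partSeq : ∑ i ∈ range a, partSeq p i = a := by
  unfold partSeq
  rw [List.sum_range_getD_zero _ (length_sort_parts_le p), ← Multiset.sum_coe,
    Multiset.sort_eq, p.parts_sum]

theorem exists_lt_partSeq_eq {x : ℕ} (hx : x ∈ p.parts) : ∃ i < a, partSeq p i = x := by
  obtain ⟨i, hi, rfl⟩ := List.mem_iff_getElem.1 ((Multiset.mem_sort (r := (· ≥ ·))).2 hx)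
  exact ⟨i, hi.trans_le (length_sort_parts_le p), List.getD_eq_getElem _ _ hi⟩

def partGap (i : ℕ) : ℕ := partSeq p i - partSeq p (i + 1)

theorem partSeq_eq_partGap_add (i : ℕ) : partSeq p i = partGap p i + partSeq p (i + 1) :=
  (Nat.sub_add_cancel (partSeq_succ_le p i)).symm

theorem dvd_partSeq_of_forall_dvd_partGap {k : ℕ} (h : ∀ j < a, k ∣ partGap p j) (i : ℕ) :
    k ∣ partSeq p i := by
  induction hn : a - i generalizing i with
  | zero => rw [partSeq_eq_zero_of_le p (by omega)]; exact dvd_zero k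
  | succ n ih =>
    rw [partSeq_eq_partGap_add]
    exact dvd_add (h i (by omega)) (ih (i + 1) (by omega))

theorem sum_range_succ_mul_partGap : ∑ i ∈ range a, (i + 1) * partGap p i = a := by
  zify
  simp only [partGap, Nat.cast_sub (partSeq_succ_le p _)]
  rw [sum_range_succ_mul_sub_succ, partSeq_eq_zero_of_le p le_rfl, Nat.cast_zero, mul_zero,
    sub_zero]
  exact_mod_cast sum_range_partSeq p

theorem exists_lt_not_dvd_partGap {k : ℕ} (h : ∃ x ∈ p.parts, ¬ k ∣ x) :
    ∃ i < a, ¬ k ∣ partGap p i := by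
  obtain ⟨x, hx, hkx⟩ := h
  obtain ⟨j, -, rfl⟩ := exists_lt_partSeq_eq p hx
  by_contra! hk
  exact hkx (dvd_partSeq_of_forall_dvd_partGap p hk j)

theorem dvd_succ_of_not_dvd_partGap {q i : ℕ} (hq : q.Prime) (ha : q ∣ a)
    (hi : ¬ q ∣ partGap p i) (hrest : ∀ j ∈ (range a).erase i, q ∣ partGap p j) : q ∣ i + 1 := by
  have hia : i ∈ range a := by
    by_contra h
    exact hi (by simp [partGap, partSeq_eq_zero_of_le p (not_lt.1 (mt mem_range.2 h))])
  have hsum : q ∣ ∑ j ∈ (range a).erase i, (j + 1) * partGap p j :=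
    dvd_sum fun j hj => (hrest j hj).mul_left _
  rw [← sum_range_succ_mul_partGap p, ← add_sum_erase _ _ hia] at ha
  exact (hq.dvd_mul.1 ((Nat.dvd_add_left hsum).1 ha)).resolve_right hi

end Partition

theorem nine_dvd_prod_choose_general (χ : ℤ) (a : ℕ) (ha3 : 3 ∣ a)
    (p : Nat.Partition a) (hpart : ∃ x ∈ p.parts, ¬ 3 ∣ x) :
    9 ∣ ∏ i ∈ Finset.range a,
        Ring.choose (3 * ((i : ℤ) + 1) * χ - 1 + ((partSeq p i - partSeq p (i + 1) : ℕ) : ℤ))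
          (partSeq p i - partSeq p (i + 1)) := by
  let f (i : ℕ) : ℤ := Ring.choose (3 * ((i : ℤ) + 1) * χ - 1 + (partGap p i : ℤ)) (partGap p i)
  change 9 ∣ ∏ i ∈ range a, f i
  have coprime {i : ℕ} (hi : ¬ 3 ∣ partGap p i) : IsCoprime (3 : ℤ) (partGap p i) :=
    (Int.prime_three.coprime_iff_not_dvd).2 (by exact_mod_cast hi)
  have three_dvd {i : ℕ} (hi : ¬ 3 ∣ partGap p i) : (3 : ℤ) ∣ f i :=
    dvd_choose_sub_one_add_of_isCoprime (dvd_mul_of_dvd_left (dvd_mul_right 3 _) χ) (coprime hi)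
  obtain ⟨i, hia, hi⟩ := exists_lt_not_dvd_partGap p hpart
  have hi_mem : i ∈ range a := mem_range.2 hia
  by_cases hj : ∃ j ∈ (range a).erase i, ¬ 3 ∣ partGap p j
  · obtain ⟨j, hj_mem, hj⟩ := hj
    rw [show (9 : ℤ) = 3 * 3 by norm_num, ← mul_prod_erase _ f hi_mem]
    exact mul_dvd_mul (three_dvd hi) ((three_dvd hj).trans (dvd_prod_of_mem f hj_mem))
  push Not at hj
  have h3i : 3 ∣ i + 1 := dvd_succ_of_not_dvd_partGap p Nat.prime_three ha3 hi hj
  have h9 : (9 : ℤ) ∣ f i := by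
    refine dvd_choose_sub_one_add_of_isCoprime ?_ (by simpa using (coprime hi).pow_left (m := 2))
    exact dvd_mul_of_dvd_left (mul_dvd_mul_left 3 (by exact_mod_cast h3i : (3 : ℤ) ∣ i + 1)) χ
  exact h9.trans (dvd_prod_of_mem f hi_mem)

/-- Let `χ ∈ ℤ`, let `a` be a positive integer divisible by `3`, and let `p` be a
partition of `a` with at least one part not divisible by `3`.  With `d_i = p_i - p_{i+1}`,
the product `∏_{i ≥ 1} C(3iχ - 1 + d_i, d_i)` is divisible by `9`.  A partition of `a`
has at most `a` parts, so `d_i = 0` and the factor equals `1` for `i > a`; hence the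
(finite) product may be taken over `1 ≤ i ≤ a`. -/
theorem nine_dvd_prod_choose (χ : ℤ) (a : ℕ) (ha : 0 < a) (ha3 : 3 ∣ a)
    (p : Nat.Partition a) (hpart : ∃ x ∈ p.parts, ¬ 3 ∣ x) :
    9 ∣ ∏ i ∈ Finset.range a,
        Ring.choose (3 * ((i : ℤ) + 1) * χ - 1 + ((partSeq p i - partSeq p (i + 1) : ℕ) : ℤ))
          (partSeq p i - partSeq p (i + 1)) :=
  nine_dvd_prod_choose_general χ a ha3 p hpart
end
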